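/- arXiv:2403.00304 — 7 statements merged into one kernel-verified Lean document; each statement's English description precedes it below -/
import Mathlib

section
/- Let 0 < β < α < 1, let f(s) = (α(1−s) + (1−β)s)/(1−βs), and let y ≥ 1 be an integer. Then for every real s with |s| ≤ 1, f(s)^y = α^y + ∑_{m=1}^{∞} [ ∑_{j=1}^{min(m,y)} C(y,j)·C(m−1,j−1)·((1−α)(1−β))^j·α^{y−j}·β^{m−j} ]·s^m, where C(·,·) denotes the binomial coefficient. (Equivalently, the y-fold convolution of the pmf p_{G*} with itself assigns mass α^y to 0 and mass ∑_{j=1}^{min(m,y)} C(y,j)C(m−1,j−1)((1−α)(1−β))^j α^{y−j} β^{m−j} to each m ≥ 1.) -/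
/-- pgf of the NoGeAR(1) counting variable G*. -/
noncomputable def fG (α β : ℝ) (s : ℝ) : ℝ :=
  (α * (1 - s) + (1 - β) * s) / (1 - β * s)

/-!
Writing `A = (1 - α)(1 - β)`, the pgf is `f(s) = α + A · s / (1 - βs)`, so the binomial theorem
gives `f(s)^y - α^y = ∑_{j=1}^{y} C(y,j) α^{y-j} A^j (s / (1 - βs))^j`. Since `|βs| < 1`, each
`(s / (1 - βs))^j` expands by the negative binomial series as `∑_m C(m, j-1) β^{m+1-j} s^{m+1}`;
the terms with `j > m + 1` vanish, which truncates the inner sum at `min (m + 1) y`.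
-/

open Finset

theorem hasSum_choose_mul_geometric_sub_of_norm_lt_one {𝕜 : Type*} [NormedDivisionRing 𝕜]
    (k : ℕ) {r : 𝕜} (hr : ‖r‖ < 1) :
    HasSum (fun n ↦ (n.choose k : 𝕜) * r ^ (n - k)) (1 / (1 - r) ^ (k + 1)) := by
  have hinit : ∑ n ∈ range k, (n.choose k : 𝕜) * r ^ (n - k) = 0 :=
    sum_eq_zero fun n hn ↦ by simp [Nat.choose_eq_zero_of_lt (mem_range.1 hn)]
  rw [← hasSum_nat_add_iff' k, hinit, sub_zero]
  simpa using hasSum_choose_mul_geometric_of_norm_lt_one k hr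

theorem hasSum_choose_mul_pow_mul_pow_succ {𝕜 : Type*} [NormedField 𝕜]
    (k : ℕ) {b s : 𝕜} (hbs : ‖b * s‖ < 1) :
    HasSum (fun m ↦ (m.choose k : 𝕜) * b ^ (m - k) * s ^ (m + 1))
      ((s / (1 - b * s)) ^ (k + 1)) := by
  rw [div_pow, div_eq_mul_one_div]
  refine ((hasSum_choose_mul_geometric_sub_of_norm_lt_one k hbs).mul_left _).congr_fun fun m ↦ ?_
  rcases lt_or_ge m k with hmk | hkm
  · simp [Nat.choose_eq_zero_of_lt hmk]
  · obtain ⟨n, rfl⟩ := Nat.exists_eq_add_of_le hkm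
    rw [Nat.add_sub_cancel_left, mul_pow]
    ring

theorem add_pow_sub_pow_eq_sum_Icc {R : Type*} [CommRing R] (a b : R) (n : ℕ) :
    (a + b) ^ n - a ^ n = ∑ j ∈ Icc 1 n, (n.choose j : R) * a ^ (n - j) * b ^ j := by
  rw [add_comm, add_pow, range_eq_Ico, sum_eq_sum_Ico_succ_bot n.succ_pos, zero_add,
    Nat.succ_eq_add_one, Ico_add_one_right_eq_Icc]
  simp only [pow_zero, one_mul, Nat.sub_zero, Nat.choose_zero_right, Nat.cast_one, mul_one,
    add_sub_cancel_left]
  exact sum_congr rfl fun j _ ↦ by ring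

theorem fG_eq_add_mul_div {α β s : ℝ} (h : 1 - β * s ≠ 0) :
    fG α β s = α + (1 - α) * (1 - β) * (s / (1 - β * s)) := by
  rw [fG, div_eq_iff h, add_mul, mul_assoc _ (s / _), div_mul_cancel₀ _ h]
  ring

theorem pG_pgf_pow_general (α β : ℝ) (hβ : 0 < β) (hβα : β < α) (hα : α < 1)
    (y : ℕ) (s : ℝ) (hs : |s| ≤ 1) :
    HasSum (fun m : ℕ =>
        (∑ j ∈ Finset.Icc 1 (min (m + 1) y),
          (y.choose j : ℝ) * (m.choose (j - 1) : ℝ) *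
            ((1 - α) * (1 - β)) ^ j * α ^ (y - j) * β ^ (m + 1 - j)) * s ^ (m + 1))
      (fG α β s ^ y - α ^ y) := by
  have hbs : ‖β * s‖ < 1 := by
    rw [norm_mul, Real.norm_of_nonneg hβ.le, Real.norm_eq_abs]
    nlinarith [abs_nonneg s]
  have hne : 1 - β * s ≠ 0 := by
    have hlt : β * s < 1 := (abs_lt.1 hbs).2
    linarith
  rw [fG_eq_add_mul_div hne, add_pow_sub_pow_eq_sum_Icc]
  generalize (1 - α) * (1 - β) = A
  have hterm : ∀ j ∈ Icc 1 y, HasSum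
      (fun m ↦ (y.choose j : ℝ) * (m.choose (j - 1) : ℝ) * A ^ j * α ^ (y - j) *
        β ^ (m + 1 - j) * s ^ (m + 1))
      ((y.choose j : ℝ) * α ^ (y - j) * (A * (s / (1 - β * s))) ^ j) := by
    intro j hj
    obtain ⟨k, rfl⟩ := Nat.exists_eq_add_of_le' (mem_Icc.1 hj).1
    rw [mul_pow, ← mul_assoc]
    refine ((hasSum_choose_mul_pow_mul_pow_succ k hbs).mul_left _).congr_fun fun m ↦ ?_
    rw [Nat.add_sub_cancel, Nat.add_sub_add_right]
    ring
  refine (hasSum_sum hterm).congr_fun fun m ↦ ?_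
  rw [sum_mul]
  refine sum_subset (Icc_subset_Icc_right (min_le_right _ _)) fun j hj hj' ↦ ?_
  have hmj : m < j - 1 := by
    simp only [mem_Icc, le_min_iff, not_and, not_le] at hj hj'
    omega
  simp [Nat.choose_eq_zero_of_lt hmj]

theorem pG_pgf_pow (α β : ℝ) (hβ : 0 < β) (hβα : β < α) (hα : α < 1)
    (y : ℕ) (hy : 1 ≤ y) (s : ℝ) (hs : |s| ≤ 1) :
    HasSum (fun m : ℕ =>
        (∑ j ∈ Finset.Icc 1 (min (m + 1) y),
          (y.choose j : ℝ) * (m.choose (j - 1) : ℝ) *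
            ((1 - α) * (1 - β)) ^ j * α ^ (y - j) * β ^ (m + 1 - j)) * s ^ (m + 1))
      (fG α β s ^ y - α ^ y) :=
  pG_pgf_pow_general α β hβ hβα hα y s hs
end

section
/- Let 0 < β < α < 1 and β < θ < 1, and set λ = (αθ−β)/(θ−β). Define f(s) = (α(1−s) + (1−β)s)/(1−βs), g(s) = (1−θ)/(1−θs), and P_ε(s) = λ(1−θ)/(1−θs) + (1−λ)(1−β)/(1−βs). Then for every real s with 0 ≤ s ≤ 1, g(s) = P_ε(s)·g(f(s)). (This identity expresses that the geometric(θ) distribution is the stationary marginal of the NoGeAR(1) recursion X_t = ω ⊛ X_{t−1} + ε_t.) -/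
/-- pgf of the geometric(θ) distribution with pmf (1-θ)θ^x. -/
noncomputable def gGeom (θ : ℝ) (s : ℝ) : ℝ := (1 - θ) / (1 - θ * s)

/-- pgf of the NoGeAR(1) innovation distribution. -/
noncomputable def Peps (α β θ : ℝ) (s : ℝ) : ℝ :=
  ((α * θ - β) / (θ - β)) * (1 - θ) / (1 - θ * s)
    + (1 - (α * θ - β) / (θ - β)) * (1 - β) / (1 - β * s)

section

variable {α β θ s : ℝ}

lemma fG_le_one (hα : α ≤ 1) (hs : s ≤ 1) (hβs : β * s < 1) : fG α β s ≤ 1 := by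
  rw [fG, div_le_one (by linarith)]
  nlinarith

lemma Peps_eq_div (hθβ : θ ≠ β) (hθs : 1 - θ * s ≠ 0) (hβs : 1 - β * s ≠ 0) :
    Peps α β θ s = (1 - θ * fG α β s) / (1 - θ * s) := by
  have hθβ' : θ - β ≠ 0 := sub_ne_zero.mpr hθβ
  rw [Peps, fG]
  field_simp
  ring

lemma gGeom_eq_Peps_mul_gGeom_fG (hθβ : θ ≠ β) (hθs : 1 - θ * s ≠ 0) (hβs : 1 - β * s ≠ 0)
    (hθf : 1 - θ * fG α β s ≠ 0) :
    gGeom θ s = Peps α β θ s * gGeom θ (fG α β s) := by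
  rw [Peps_eq_div hθβ hθs hβs, gGeom, gGeom]
  field_simp

end

theorem geometric_stationary_general (α β θ : ℝ) (hβ : 0 < β) (hα : α < 1)
    (hβθ : β < θ) (hθ : θ < 1) (s : ℝ) (hs1 : s ≤ 1) :
    gGeom θ s = Peps α β θ s * gGeom θ (fG α β s) := by
  have hθ0 : 0 < θ := hβ.trans hβθ
  have hβs : β * s < 1 := by nlinarith
  have hθs : θ * s < 1 := by nlinarith
  have hθf : θ * fG α β s < 1 :=
    (mul_le_of_le_one_right hθ0.le (fG_le_one hα.le hs1 hβs)).trans_lt hθ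
  exact gGeom_eq_Peps_mul_gGeom_fG hβθ.ne' (sub_ne_zero.mpr hθs.ne')
    (sub_ne_zero.mpr hβs.ne') (sub_ne_zero.mpr hθf.ne')

theorem geometric_stationary (α β θ : ℝ) (hβ : 0 < β) (hβα : β < α) (hα : α < 1)
    (hβθ : β < θ) (hθ : θ < 1) (s : ℝ) (hs0 : 0 ≤ s) (hs1 : s ≤ 1) :
    gGeom θ s = Peps α β θ s * gGeom θ (fG α β s) :=
  geometric_stationary_general α β θ hβ hα hβθ hθ s hs1
end

section
/- Let 0 < β < α < 1 and let f(s) = (α(1−s) + (1−β)s)/(1−βs). For every integer h ≥ 1 and every real s with 0 ≤ s ≤ 1, the h-fold iterate f^{(h)}(s) = f(f(···f(s)···)) (h times) equals [ ((−1)^{h+1}α^h + ∑_{i=1}^{h−1}(−1)^{i+1}α^i ∑_{j=0}^{h−i} C(h,j)(−β)^{h−j−i})·(1−s) + (1−β)^h·s ] / [ 1 + β(1−s)·∑_{i=1}^{h−1}(−α)^i ∑_{j=0}^{h−i−1} C(h,j)(−β)^{h−j−i−1} − βs·∑_{j=0}^{h−1} C(h,j)(−β)^{h−j−1} ], where C(·,·)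 denotes the binomial coefficient and empty sums are zero. -/
/-!
`fG α β` is the Möbius map of the matrix `!![1 - α - β, α; -β, 1]`, with eigenvalues `1 - β` and
`1 - α` (fixed points `1` and `α / β`). Hence `(fG α β)^[h] s = N_h / D_h` with
`N_h = (1 - β)^h (α - β s) - α (1 - α)^h (1 - s)` and `D_h` the same with the second `α` replaced
by `β`; `D_h > 0` for `s ≤ 1`, so the induction never divides by zero. Expanding `(1 - α)^h` and
`(1 - β)^h` binomially and summing the geometric series `∑ x^i y^(m-i)` shows that the numerator and
denominator in the statement are `N_h / (α - β)` and `D_h / (α - β)`.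
-/

open Finset

section SumIdentities

variable {R : Type*} [CommRing R]

theorem sub_mul_sum_Icc_pow_mul_pow (x y : R) (m : ℕ) :
    (x - y) * ∑ i ∈ Icc 1 m, x ^ i * y ^ (m - i) = x * (x ^ m - y ^ m) := by
  rw [← Ico_add_one_right_eq_Icc, sum_Ico_eq_sum_range, Nat.add_sub_cancel, ← geom_sum₂_mul,
    sum_mul, mul_sum, mul_sum]
  refine sum_congr rfl fun i _ => ?_
  rw [show m - (1 + i) = m - 1 - i by omega]
  ring

theorem sub_mul_sum_Icc_pow_mul_sum_range (x y : R) (c : ℕ → R) (n : ℕ) :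
    (x - y) * ∑ i ∈ Icc 1 n, x ^ i * ∑ j ∈ range (n - i + 1), c j * y ^ (n - j - i) =
      x * ∑ j ∈ range (n + 1), c j * (x ^ (n - j) - y ^ (n - j)) := by
  have swap : ∑ i ∈ Icc 1 n, x ^ i * ∑ j ∈ range (n - i + 1), c j * y ^ (n - j - i) =
      ∑ j ∈ range (n + 1), c j * ∑ i ∈ Icc 1 (n - j), x ^ i * y ^ (n - j - i) := by
    simp_rw [mul_sum]
    refine (sum_comm' fun i j => ?_).trans (sum_congr rfl fun j _ => sum_congr rfl fun i _ => ?_)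
    · simp only [mem_Icc, mem_range]
      omega
    · ring
  rw [swap, mul_sum, mul_sum]
  refine sum_congr rfl fun j _ => ?_
  linear_combination c j * sub_mul_sum_Icc_pow_mul_pow x y (n - j)

theorem mul_sum_range_choose_mul_pow (x : R) (h : ℕ) :
    x * ∑ j ∈ range h, (h.choose j : R) * x ^ (h - j - 1) = (1 + x) ^ h - 1 := by
  have hx : ∀ j ∈ range h, x * ((h.choose j : R) * x ^ (h - j - 1)) = h.choose j * x ^ (h - j) := by
    intro j hj
    rw [mul_left_comm, ← pow_succ', Nat.sub_add_cancel (by have := mem_range.mp hj; omega)]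
  rw [mul_sum, sum_congr rfl hx, add_pow, sum_range_succ]
  simp [mul_comm]

theorem sum_range_succ_choose_mul_pow_sub (x y : R) (h : ℕ) :
    ∑ j ∈ range (h + 1), (h.choose j : R) * (x ^ (h - j) - y ^ (h - j)) =
      (1 + x) ^ h - (1 + y) ^ h := by
  rw [add_pow, add_pow, ← sum_sub_distrib]
  exact sum_congr rfl fun j _ => by ring

end SumIdentities

theorem sub_mul_numerator_sum_eq (α β : ℝ) {h : ℕ} (hh : 1 ≤ h) :
    (α - β) * ((-1 : ℝ) ^ (h + 1) * α ^ h
      + ∑ i ∈ Icc 1 (h - 1), (-1 : ℝ) ^ (i + 1) * α ^ i *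
          ∑ j ∈ range (h - i + 1), (h.choose j : ℝ) * (-β) ^ (h - j - i))
      = α * ((1 - β) ^ h - (1 - α) ^ h) := by
  have top : (-1 : ℝ) ^ (h + 1) * α ^ h
      + ∑ i ∈ Icc 1 (h - 1), (-1 : ℝ) ^ (i + 1) * α ^ i *
          ∑ j ∈ range (h - i + 1), (h.choose j : ℝ) * (-β) ^ (h - j - i)
      = -∑ i ∈ Icc 1 h, (-α) ^ i * ∑ j ∈ range (h - i + 1), (h.choose j : ℝ) * (-β) ^ (h - j - i) := by
    have sign : ∀ i, (-1 : ℝ) ^ (i + 1) * α ^ i = -(-α) ^ i := fun i => by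
      rw [neg_pow, pow_succ]; ring
    obtain ⟨n, rfl⟩ : ∃ n, h = n + 1 := ⟨h - 1, by omega⟩
    rw [Nat.add_sub_cancel, sum_Icc_succ_top (by omega), Nat.sub_self, zero_add, sum_range_one]
    simp only [sign, Nat.sub_zero, Nat.sub_self, pow_zero, Nat.choose_zero_right, Nat.cast_one,
      mul_one, neg_mul, sum_neg_distrib]
    ring
  have key := sub_mul_sum_Icc_pow_mul_sum_range (-α) (-β) (fun j => (h.choose j : ℝ)) h
  rw [sum_range_succ_choose_mul_pow_sub] at key
  rw [top]
  linear_combination key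

theorem mul_sub_mul_denominator_sum_eq (α β : ℝ) {h : ℕ} (hh : 1 ≤ h) :
    β * (α - β) * ∑ i ∈ Icc 1 (h - 1), (-α) ^ i *
        ∑ j ∈ range (h - i), (h.choose j : ℝ) * (-β) ^ (h - j - i - 1)
      = α * (1 - β) ^ h - β * (1 - α) ^ h - (α - β) := by
  obtain ⟨n, rfl⟩ : ∃ n, h = n + 1 := ⟨h - 1, by omega⟩
  have reindex : ∑ i ∈ Icc 1 (n + 1 - 1), (-α) ^ i *
        ∑ j ∈ range (n + 1 - i), ((n + 1).choose j : ℝ) * (-β) ^ (n + 1 - j - i - 1)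
      = ∑ i ∈ Icc 1 n, (-α) ^ i *
        ∑ j ∈ range (n - i + 1), ((n + 1).choose j : ℝ) * (-β) ^ (n - j - i) := by
    rw [Nat.add_sub_cancel]
    refine sum_congr rfl fun i hi => ?_
    rw [show n + 1 - i = n - i + 1 by have := (mem_Icc.mp hi).2; omega]
    refine congrArg _ (sum_congr rfl fun j _ => ?_)
    rw [show n + 1 - j - i - 1 = n - j - i by omega]
  have key := sub_mul_sum_Icc_pow_mul_sum_range (-α) (-β) (fun j => ((n + 1).choose j : ℝ)) n
  have hx := mul_sum_range_choose_mul_pow (-α) (n + 1)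
  have hy := mul_sum_range_choose_mul_pow (-β) (n + 1)
  simp only [Nat.add_sub_cancel, Nat.sub_right_comm (n + 1) _ 1] at hx hy
  simp only [mul_sub, sum_sub_distrib] at key
  rw [reindex]
  linear_combination (-β) * key - β * hx + α * hy

def fGNum (α β s : ℝ) (h : ℕ) : ℝ := (1 - β) ^ h * (α - β * s) - α * (1 - α) ^ h * (1 - s)

def fGDen (α β s : ℝ) (h : ℕ) : ℝ := (1 - β) ^ h * (α - β * s) - β * (1 - α) ^ h * (1 - s)

theorem fG_div (α β N : ℝ) {D : ℝ} (hD : D ≠ 0) :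
    fG α β (N / D) = (α * (D - N) + (1 - β) * N) / (D - β * N) := by
  have hnum : α * (1 - N / D) + (1 - β) * (N / D) = (α * (D - N) + (1 - β) * N) / D := by
    field_simp
  have hden : 1 - β * (N / D) = (D - β * N) / D := by field_simp
  rw [fG, hnum, hden, div_div_div_cancel_right₀ hD]

theorem fG_fGNum_div_fGDen {α β s : ℝ} {k : ℕ} (hD : fGDen α β s k ≠ 0) :
    fG α β (fGNum α β s k / fGDen α β s k) = fGNum α β s (k + 1) / fGDen α β s (k + 1) := by
  rw [fG_div _ _ _ hD]
  unfold fGNum fGDen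
  congr 1 <;> ring

theorem fG_iterate_eq_fGNum_div_fGDen {α β s : ℝ} (hD : ∀ k, fGDen α β s k ≠ 0)
    (h : ℕ) : (fG α β)^[h] s = fGNum α β s h / fGDen α β s h := by
  induction h with
  | zero =>
    rw [Function.iterate_zero_apply, eq_div_iff (hD 0)]
    unfold fGDen fGNum
    ring
  | succ k ih => rw [Function.iterate_succ_apply', ih, fG_fGNum_div_fGDen (hD k)]

theorem fGDen_pos {α β s : ℝ} (hβ : 0 ≤ β) (hβα : β < α) (hα : α < 1) (hs : s ≤ 1) (h : ℕ) :
    0 < fGDen α β s h := by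
  have hpow : (1 - α) ^ h ≤ (1 - β) ^ h := pow_le_pow_left₀ (by linarith) (by linarith) h
  calc 0 < (1 - β) ^ h * (α - β) := mul_pos (pow_pos (by linarith) h) (by linarith)
    _ = (1 - β) ^ h * (α - β * s) - β * (1 - β) ^ h * (1 - s) := by ring
    _ ≤ fGDen α β s h := by
      unfold fGDen
      gcongr ?_ - β * ?_ * _

theorem fG_iterate_closed_form_general (α β : ℝ) (hβ : 0 < β) (hβα : β < α) (hα : α < 1)
    (h : ℕ) (hh : 1 ≤ h) (s : ℝ) (hs1 : s ≤ 1) :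
    (fG α β)^[h] s =
      (((-1 : ℝ) ^ (h + 1) * α ^ h
          + ∑ i ∈ Finset.Icc 1 (h - 1), (-1 : ℝ) ^ (i + 1) * α ^ i *
              ∑ j ∈ Finset.range (h - i + 1), (h.choose j : ℝ) * (-β) ^ (h - j - i))
          * (1 - s)
        + (1 - β) ^ h * s)
      /
      (1 + β * (1 - s) *
          ∑ i ∈ Finset.Icc 1 (h - 1), (-α) ^ i *
            ∑ j ∈ Finset.range (h - i), (h.choose j : ℝ) * (-β) ^ (h - j - i - 1)
        - β * s * ∑ j ∈ Finset.range h, (h.choose j : ℝ) * (-β) ^ (h - j - 1)) := by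
  rw [fG_iterate_eq_fGNum_div_fGDen fun k => (fGDen_pos hβ.le hβα hα hs1 k).ne']
  conv_rhs => rw [← mul_div_mul_left _ _ (sub_ne_zero.2 hβα.ne')]
  unfold fGNum fGDen
  congr 1
  · linear_combination (s - 1) * sub_mul_numerator_sum_eq α β hh
  · linear_combination (s - 1) * mul_sub_mul_denominator_sum_eq α β hh
      - (α - β) * s * mul_sum_range_choose_mul_pow (-β) h

theorem fG_iterate_closed_form (α β : ℝ) (hβ : 0 < β) (hβα : β < α) (hα : α < 1)
    (h : ℕ) (hh : 1 ≤ h) (s : ℝ) (hs0 : 0 ≤ s) (hs1 : s ≤ 1) :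
    (fG α β)^[h] s =
      (((-1 : ℝ) ^ (h + 1) * α ^ h
          + ∑ i ∈ Finset.Icc 1 (h - 1), (-1 : ℝ) ^ (i + 1) * α ^ i *
              ∑ j ∈ Finset.range (h - i + 1), (h.choose j : ℝ) * (-β) ^ (h - j - i))
          * (1 - s)
        + (1 - β) ^ h * s)
      /
      (1 + β * (1 - s) *
          ∑ i ∈ Finset.Icc 1 (h - 1), (-α) ^ i *
            ∑ j ∈ Finset.range (h - i), (h.choose j : ℝ) * (-β) ^ (h - j - i - 1)
        - β * s * ∑ j ∈ Finset.range h, (h.choose j : ℝ) * (-β) ^ (h - j - 1)) :=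
  fG_iterate_closed_form_general α β hβ hβα hα h hh s hs1
end

section
/- Let 0 < β < α < 1, β < θ < 1 and β < αθ, set λ = (αθ−β)/(θ−β), let p_ε(x) = λθ^x(1−θ) + (1−λ)β^x(1−β), let f(s) = (α(1−s)+(1−β)s)/(1−βs) and P_ε(s) = λ(1−θ)/(1−θs) + (1−λ)(1−β)/(1−βs). Define the one-step transition function p1(y,x) by: p1(0,0) = 1−αθ; p1(0,x) = p_ε(x) for x ≥ 1; p1(y,0) = α^y(1−αθ) for y ≥ 1; and for x ≥ 1, y ≥ 1, p1(y,x) = α^y p_ε(x) + ∑_{m=1}^{x} ∑_{j=1}^{min(m,y)} C(y,j)C(m−1,j−1)((1−α)(1−β))^j α^{y−j} β^{m−j} p_ε(x−m). Then for every integer y ≥ 0 and every real s with |s| ≤ 1, P_ε(s)·f(s)^y = ∑_{x=0}^{∞} p1(y,x)·s^x; i.e., Eq. (4) gives exactly the coefficients of the one-step ahead conditional probability generating function of the NoGeAR(1) process. -/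
/-!
Since `fG α β s = α + (1 - α)(1 - β) · s / (1 - β s)`, the binomial theorem and the negative
binomial series `(s / (1 - β s)) ^ j = ∑ₘ C(m-1, j-1) β^(m-j) s^m` expand `fG ^ y` into a power
series whose coefficients are the inner double sums of `p1`, while `Peps` is a mixture of two
geometric series with coefficients `pEps`. So `p1 y` is the Cauchy product of these two coefficient
sequences. All coefficients are nonnegative and both series also converge at `|s|`, so the
product series converges absolutely to `Peps s * fG s ^ y`.
-/

/-- NoGeAR(1) innovation pmf. -/
noncomputable def pEps (α β θ : ℝ) (x : ℕ) : ℝ :=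
  ((α * θ - β) / (θ - β)) * θ ^ x * (1 - θ)
    + (1 - (α * θ - β) / (θ - β)) * β ^ x * (1 - β)

/-- One-step transition probabilities of the NoGeAR(1) chain (Eq. (4)). -/
noncomputable def p1 (α β θ : ℝ) (y x : ℕ) : ℝ :=
  if y = 0 then
    (if x = 0 then 1 - α * θ else pEps α β θ x)
  else if x = 0 then α ^ y * (1 - α * θ)
  else
    α ^ y * pEps α β θ x
      + ∑ m ∈ Finset.Icc 1 x, ∑ j ∈ Finset.Icc 1 (min m y),
          (y.choose j : ℝ) * ((m - 1).choose (j - 1) : ℝ) *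
            ((1 - α) * (1 - β)) ^ j * α ^ (y - j) * β ^ (m - j) * pEps α β θ (x - m)

open Finset

-- Truncated subtraction makes `(m - 1).choose (j - 1)` equal `1` at `j = 0` and at
-- `m = 0, j = 1`, hence both guards.
noncomputable def negBinomCoeff (β : ℝ) (j m : ℕ) : ℝ :=
  if j = 0 then (if m = 0 then 1 else 0)
  else if m = 0 then 0 else ((m - 1).choose (j - 1) : ℝ) * β ^ (m - j)

lemma hasSum_negBinomCoeff_mul_pow {β s : ℝ} (hβs : ‖β * s‖ < 1) (j : ℕ) :
    HasSum (fun m => negBinomCoeff β j m * s ^ m) ((s / (1 - β * s)) ^ j) := by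
  rcases j with _ | k
  · convert hasSum_ite_eq 0 (1 : ℝ) using 1
    · funext m
      split_ifs with hm <;> simp [negBinomCoeff, hm]
    · rw [pow_zero]
  have hhead : ∑ m ∈ range (k + 1), negBinomCoeff β (k + 1) m * s ^ m = 0 := by
    refine sum_eq_zero fun m hm => ?_
    rcases m with _ | m
    · simp [negBinomCoeff]
    · rw [mem_range] at hm
      simp [negBinomCoeff, Nat.choose_eq_zero_of_lt (show m < k by omega)]
  have htail : HasSum (fun i => negBinomCoeff β (k + 1) (i + (k + 1)) * s ^ (i + (k + 1)))
      ((s / (1 - β * s)) ^ (k + 1)) := by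
    have h := (hasSum_choose_mul_geometric_of_norm_lt_one k hβs).mul_left (s ^ (k + 1))
    rw [mul_one_div, ← div_pow] at h
    refine h.congr_fun fun i => ?_
    simp only [negBinomCoeff, Nat.add_eq_zero_iff, one_ne_zero, and_false, if_false]
    rw [show i + (k + 1) - 1 = i + k by omega, show i + (k + 1) - (k + 1) = i by omega,
      Nat.add_sub_cancel, mul_pow]
    ring
  have h := htail.sum_range_add (f := fun m => negBinomCoeff β (k + 1) m * s ^ m)
  rwa [hhead, zero_add] at h

noncomputable def fGPowCoeff (α β : ℝ) (y m : ℕ) : ℝ :=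
  if m = 0 then α ^ y
  else ∑ j ∈ Icc 1 (min m y), (y.choose j : ℝ) * ((m - 1).choose (j - 1) : ℝ) *
      ((1 - α) * (1 - β)) ^ j * α ^ (y - j) * β ^ (m - j)

lemma fGPowCoeff_eq_sum_negBinomCoeff (α β : ℝ) (y m : ℕ) :
    fGPowCoeff α β y m = ∑ j ∈ range (y + 1),
      (y.choose j : ℝ) * ((1 - α) * (1 - β)) ^ j * α ^ (y - j) * negBinomCoeff β j m := by
  rcases m with _ | m
  · rw [sum_eq_single 0 (fun j _ hj => by simp [negBinomCoeff, hj]) (by simp)]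
    simp [fGPowCoeff, negBinomCoeff]
  have hsub : Icc 1 (min (m + 1) y) ⊆ range (y + 1) := fun j hj => by
    rw [mem_Icc] at hj; rw [mem_range]; omega
  have hvanish : ∀ j ∈ range (y + 1), j ∉ Icc 1 (min (m + 1) y) →
      (y.choose j : ℝ) * ((1 - α) * (1 - β)) ^ j * α ^ (y - j) * negBinomCoeff β j (m + 1) = 0 := by
    intro j hj hj'
    rw [mem_range] at hj
    rw [mem_Icc, not_and_or, not_le, not_le, min_lt_iff] at hj'
    rcases Nat.eq_zero_or_pos j with rfl | hj0
    · simp [negBinomCoeff]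
    · simp [negBinomCoeff, hj0.ne', Nat.choose_eq_zero_of_lt (show m < j - 1 by omega)]
  rw [fGPowCoeff, if_neg m.succ_ne_zero, ← sum_subset hsub hvanish]
  refine sum_congr rfl fun j hj => ?_
  rw [mem_Icc] at hj
  simp only [negBinomCoeff, if_neg (show j ≠ 0 by omega), if_neg m.succ_ne_zero]
  ring

lemma fG_eq_add {α β s : ℝ} (h : 1 - β * s ≠ 0) :
    fG α β s = (1 - α) * (1 - β) * (s / (1 - β * s)) + α := by
  rw [fG, mul_div_assoc', div_add' _ _ _ h]
  ring

lemma hasSum_fGPowCoeff_mul_pow (α : ℝ) {β s : ℝ} (hβs : ‖β * s‖ < 1) (y : ℕ) :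
    HasSum (fun m => fGPowCoeff α β y m * s ^ m) (fG α β s ^ y) := by
  have hne : 1 - β * s ≠ 0 := sub_ne_zero.2 fun h => by simp [← h] at hβs
  rw [fG_eq_add hne, add_pow]
  simp_rw [fGPowCoeff_eq_sum_negBinomCoeff, sum_mul]
  refine hasSum_sum fun j _ => ?_
  have h := (hasSum_negBinomCoeff_mul_pow hβs j).mul_left
    ((y.choose j : ℝ) * ((1 - α) * (1 - β)) ^ j * α ^ (y - j))
  rw [show ((1 - α) * (1 - β) * (s / (1 - β * s))) ^ j * α ^ (y - j) * (y.choose j : ℝ) =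
      y.choose j * ((1 - α) * (1 - β)) ^ j * α ^ (y - j) * (s / (1 - β * s)) ^ j by
    rw [mul_pow]; ring]
  exact h.congr_fun fun m => by ring

lemma fGPowCoeff_nonneg {α β : ℝ} (hα₀ : 0 ≤ α) (hα₁ : α ≤ 1) (hβ₀ : 0 ≤ β) (hβ₁ : β ≤ 1)
    (y m : ℕ) : 0 ≤ fGPowCoeff α β y m := by
  have : 0 ≤ (1 - α) * (1 - β) := mul_nonneg (sub_nonneg.2 hα₁) (sub_nonneg.2 hβ₁)
  unfold fGPowCoeff
  split_ifs
  · positivity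
  · exact sum_nonneg fun j _ => by positivity

lemma pEps_nonneg {α β θ : ℝ} (hα₁ : α ≤ 1) (hβ₀ : 0 ≤ β) (hβθ : β < θ) (hθ₁ : θ ≤ 1)
    (hβαθ : β ≤ α * θ) (x : ℕ) : 0 ≤ pEps α β θ x := by
  have hθβ : 0 < θ - β := sub_pos.2 hβθ
  have hlam₀ : 0 ≤ (α * θ - β) / (θ - β) := div_nonneg (sub_nonneg.2 hβαθ) hθβ.le
  have hlam₁ : 0 ≤ 1 - (α * θ - β) / (θ - β) := by
    rw [sub_nonneg, div_le_one hθβ]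
    nlinarith
  have : 0 ≤ θ := hβ₀.trans hβθ.le
  have : 0 ≤ 1 - θ := sub_nonneg.2 hθ₁
  have : 0 ≤ 1 - β := by linarith
  unfold pEps
  positivity

lemma hasSum_pEps_mul_pow (α : ℝ) {β θ s : ℝ} (hθs : ‖θ * s‖ < 1) (hβs : ‖β * s‖ < 1) :
    HasSum (fun x => pEps α β θ x * s ^ x) (Peps α β θ s) := by
  have h := ((hasSum_geometric_of_norm_lt_one hθs).mul_left
    ((α * θ - β) / (θ - β) * (1 - θ))).add
    ((hasSum_geometric_of_norm_lt_one hβs).mul_left ((1 - (α * θ - β) / (θ - β)) * (1 - β)))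
  simp only [← div_eq_mul_inv] at h
  exact h.congr_fun fun x => by rw [pEps, mul_pow, mul_pow]; ring

lemma hasSum_sum_range_mul_mul_pow {R : Type*} [NormedCommRing R] [CompleteSpace R]
    {a b : ℕ → R} {s A B : R}
    (ha : HasSum (fun m => a m * s ^ m) A) (hb : HasSum (fun m => b m * s ^ m) B)
    (ha' : Summable fun m => ‖a m * s ^ m‖) (hb' : Summable fun m => ‖b m * s ^ m‖) :
    HasSum (fun n => (∑ k ∈ range (n + 1), a k * b (n - k)) * s ^ n) (A * B) := by
  have h := hasSum_sum_range_mul_of_summable_norm ha' hb'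
  rw [ha.tsum_eq, hb.tsum_eq] at h
  refine h.congr_fun fun n => ?_
  rw [sum_mul]
  refine sum_congr rfl fun k hk => ?_
  rw [← pow_mul_pow_sub s (Nat.le_of_lt_succ (mem_range.1 hk))]
  ring

lemma summable_norm_mul_pow_of_nonneg {a : ℕ → ℝ} {s : ℝ} (ha : ∀ m, 0 ≤ a m)
    (h : Summable fun m => a m * |s| ^ m) : Summable fun m => ‖a m * s ^ m‖ :=
  h.congr fun m => by
    rw [norm_mul, norm_pow, Real.norm_eq_abs, Real.norm_eq_abs, abs_of_nonneg (ha m)]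

lemma pEps_zero (α : ℝ) {β θ : ℝ} (h : θ ≠ β) : pEps α β θ 0 = 1 - α * θ := by
  have : θ - β ≠ 0 := sub_ne_zero.2 h
  unfold pEps
  field_simp
  ring

lemma p1_eq_sum_range (α : ℝ) {β θ : ℝ} (h : θ ≠ β) (y x : ℕ) :
    p1 α β θ y x = ∑ m ∈ range (x + 1), fGPowCoeff α β y m * pEps α β θ (x - m) := by
  rw [sum_range_succ']
  rcases Nat.eq_zero_or_pos x with rfl | hx
  · by_cases hy : y = 0 <;> simp [p1, fGPowCoeff, pEps_zero α h, hy]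
  rcases Nat.eq_zero_or_pos y with rfl | hy
  · simp [p1, fGPowCoeff, hx.ne']
  rw [p1, if_neg hy.ne', if_neg hx.ne', add_comm, ← Ico_add_one_right_eq_Icc,
    sum_Ico_eq_sum_range, Nat.add_sub_cancel]
  congr 1
  refine sum_congr rfl fun k _ => ?_
  rw [add_comm 1 k, fGPowCoeff, if_neg k.succ_ne_zero, sum_mul]

theorem p1_pgf (α β θ : ℝ) (hβ : 0 < β) (hβα : β < α) (hα : α < 1)
    (hβθ : β < θ) (hθ : θ < 1) (hβαθ : β < α * θ)
    (y : ℕ) (s : ℝ) (hs : |s| ≤ 1) :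
    HasSum (fun x : ℕ => p1 α β θ y x * s ^ x) (Peps α β θ s * fG α β s ^ y) := by
  have hnorm : ∀ {r : ℝ} (t : ℝ), 0 ≤ r → r < 1 → |t| ≤ 1 → ‖r * t‖ < 1 := fun t hr₀ hr₁ ht => by
    rw [Real.norm_eq_abs, abs_mul, abs_of_nonneg hr₀]
    nlinarith [abs_nonneg t]
  have hβ₁ : β < 1 := hβα.trans hα
  have hθ₀ : 0 ≤ θ := hβ.le.trans hβθ.le
  have habs : |(|s|)| ≤ 1 := by rwa [abs_abs]
  have hfG := hasSum_fGPowCoeff_mul_pow α (hnorm s hβ.le hβ₁ hs) y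
  have hε := hasSum_pEps_mul_pow α (hnorm s hθ₀ hθ hs) (hnorm s hβ.le hβ₁ hs)
  have hfG' := summable_norm_mul_pow_of_nonneg
    (fGPowCoeff_nonneg (hβ.trans hβα).le hα.le hβ.le hβ₁.le y)
    (hasSum_fGPowCoeff_mul_pow α (hnorm |s| hβ.le hβ₁ habs) y).summable
  have hε' := summable_norm_mul_pow_of_nonneg
    (pEps_nonneg hα.le hβ.le hβθ hθ.le hβαθ.le)
    (hasSum_pEps_mul_pow α (hnorm |s| hθ₀ hθ habs) (hnorm |s| hβ.le hβ₁ habs)).summable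
  rw [mul_comm]
  simpa only [← p1_eq_sum_range α hβθ.ne'] using hasSum_sum_range_mul_mul_pow hfG hε hfG' hε'
end

section
/- Let 0 < β < α < 1 and β < θ < 1, set ω = (1−α)/(1−β), f(s) = (α(1−s) + (1−β)s)/(1−βs), and g(s) = (1−θ)/(1−θs). Fix integers h ≥ 1 and x ≥ 0 and define F(s) = g(s)·(f^{(h)}(s))^x / g(f^{(h)}(s)), the h-step ahead conditional probability generating function of the NoGeAR(1) process given X_t = x. Then the derivative of F at s = 1 equals ω^h·x + ((1−ω^h)/(1−ω))·μ_ε, where μ_ε = (1−ω)θ/(1−θ); equivalently, the h-step ahead conditional mean is E[X_{t+h}|X_t = x] = ω^h·x + (1−ω^h)·θ/(1−θ). -/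
/-!
As pgfs, `f` and `g` fix `1`, with slopes `ω` and `θ / (1 - θ)` there, so by the chain rule
`f^[h]` fixes `1` with slope `ω ^ h`. For any `φ` fixing `1` and any `g` with `g 1 = 1`, the
quotient rule gives `(g(s) φ(s) ^ x / g(φ(s)))' = φ'(1) x + (1 - φ'(1)) g'(1)` at `s = 1`.
The factor `1 - ω` of the innovation mean then cancels the denominator of `(1 - ω ^ h) / (1 - ω)`
(and when `ω = 1` both sides of that cancellation vanish).
-/

theorem hasDerivAt_mul_pow_div_comp {𝕜 : Type*} [NontriviallyNormedField 𝕜] {g φ : 𝕜 → 𝕜}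
    {m c : 𝕜} (x : ℕ) (hg₁ : g 1 = 1) (hg : HasDerivAt g m 1) (hφ₁ : φ 1 = 1)
    (hφ : HasDerivAt φ c 1) :
    HasDerivAt (fun s => g s * φ s ^ x / g (φ s)) (c * x + (1 - c) * m) 1 := by
  have hnum : HasDerivAt (fun s => g s * φ s ^ x) (m + x * c) 1 := by
    simpa [hg₁, hφ₁] using hg.fun_mul (hφ.fun_pow x)
  have hden : HasDerivAt (fun s => g (φ s)) (m * c) 1 := (hφ₁ ▸ hg).comp 1 hφ
  refine (hnum.fun_div hden (by simp [hφ₁, hg₁])).congr_deriv ?_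
  rw [hφ₁, hg₁]
  ring

section NoGeAR

variable {α β θ : ℝ}

theorem fG_one (hβ : β ≠ 1) : fG α β 1 = 1 := by
  simp [fG, sub_ne_zero.mpr hβ.symm]

theorem hasDerivAt_fG (hβ : β ≠ 1) : HasDerivAt (fG α β) ((1 - α) / (1 - β)) 1 := by
  have hlin (a b : ℝ) : HasDerivAt (fun s : ℝ => a + b * s) b 1 := by
    simpa using ((hasDerivAt_id (1 : ℝ)).const_mul b).const_add a
  have hfG : fG α β = fun s => (α + (1 - β - α) * s) / (1 + -β * s) := by
    funext s
    simp only [fG]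
    congr 1 <;> ring
  rw [hfG]
  refine ((hlin α (1 - β - α)).fun_div (hlin 1 (-β)) ?_).congr_deriv ?_
  · simpa [← sub_eq_add_neg] using sub_ne_zero.mpr hβ.symm
  · rw [mul_one, ← sub_eq_add_neg]
    field_simp [sub_ne_zero.mpr hβ.symm]
    ring

theorem gGeom_one (hθ : θ ≠ 1) : gGeom θ 1 = 1 := by
  simp [gGeom, sub_ne_zero.mpr hθ.symm]

theorem hasDerivAt_gGeom (hθ : θ ≠ 1) : HasDerivAt (gGeom θ) (θ / (1 - θ)) 1 := by
  have hden : HasDerivAt (fun s : ℝ => 1 - θ * s) (-θ) 1 := by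
    simpa using ((hasDerivAt_id (1 : ℝ)).const_mul θ).const_sub 1
  refine ((hasDerivAt_const (1 : ℝ) (1 - θ)).fun_div hden ?_).congr_deriv ?_
  · simpa using sub_ne_zero.mpr hθ.symm
  · field_simp [sub_ne_zero.mpr hθ.symm]
    ring

end NoGeAR

theorem one_sub_pow_div_one_sub_mul_cancel (ω c : ℝ) (h : ℕ) :
    (1 - ω ^ h) / (1 - ω) * ((1 - ω) * c) = (1 - ω ^ h) * c := by
  rcases eq_or_ne ω 1 with rfl | hω
  · simp
  · field_simp [sub_ne_zero.mpr hω.symm]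

theorem hstep_conditional_mean_general (α β θ : ℝ)
    (hβθ : β < θ) (hθ : θ < 1)
    (h : ℕ) (x : ℕ) (ω : ℝ) (hω : ω = (1 - α) / (1 - β)) :
    deriv (fun s : ℝ => gGeom θ s * ((fG α β)^[h] s) ^ x / gGeom θ ((fG α β)^[h] s)) 1
      = ω ^ h * x + ((1 - ω ^ h) / (1 - ω)) * ((1 - ω) * θ / (1 - θ)) := by
  have hβ₁ : β ≠ 1 := (hβθ.trans hθ).ne
  have hθ₁ : θ ≠ 1 := hθ.ne
  have hiter : HasDerivAt (fG α β)^[h] (ω ^ h) 1 :=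
    hω ▸ HasDerivAt.iterate _ (hasDerivAt_fG hβ₁) (fG_one hβ₁) h
  rw [(hasDerivAt_mul_pow_div_comp x (gGeom_one hθ₁) (hasDerivAt_gGeom hθ₁)
    (Function.iterate_fixed (fG_one hβ₁) h) hiter).deriv, mul_div_assoc,
    one_sub_pow_div_one_sub_mul_cancel]

theorem hstep_conditional_mean (α β θ : ℝ) (hβ : 0 < β) (hβα : β < α) (hα : α < 1)
    (hβθ : β < θ) (hθ : θ < 1)
    (h : ℕ) (hh : 1 ≤ h) (x : ℕ) (ω : ℝ) (hω : ω = (1 - α) / (1 - β)) :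
    deriv (fun s : ℝ => gGeom θ s * ((fG α β)^[h] s) ^ x / gGeom θ ((fG α β)^[h] s)) 1
      = ω ^ h * x + ((1 - ω ^ h) / (1 - ω)) * ((1 - ω) * θ / (1 - θ)) :=
  hstep_conditional_mean_general α β θ hβθ hθ h x ω hω
end

section
/- (Theorem 3.1, case x = 0, y = 0.) Let 0 < β < α < 1, β < θ < 1 and β < αθ, let p_ε be the NoGeAR(1) innovation pmf and p1 the one-step transition function of the NoGeAR(1) chain, and set A = ∑_{k=1}^{∞} α^k p_ε(k). Then the two-step ahead transition probability from state 0 to state 0 satisfies ∑_{k=0}^{∞} p1(0,k)·p1(k,0) = (1−αθ)·(1−αθ+A), the series on the left being convergent. -/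
/-- The quantity `A = ∑_{k=1}^∞ α^k p_ε(k)` of Theorem 3.1. -/
noncomputable def Aconst (α β θ : ℝ) : ℝ :=
  ∑' k : ℕ, α ^ (k + 1) * pEps α β θ (k + 1)

/-- The quantity `B(x,k)` of Theorem 3.1 (for x, k ≥ 1). -/
noncomputable def Bfun (α β θ : ℝ) (x k : ℕ) : ℝ :=
  ∑ m ∈ Finset.Icc 1 x, ∑ j ∈ Finset.Icc 1 (min m k),
    (k.choose j : ℝ) * ((m - 1).choose (j - 1) : ℝ) *
      ((1 - α) * (1 - β)) ^ j * α ^ (k - j) * β ^ (m - j) * pEps α β θ (x - m)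

/-!
Starting from 0, the chain can only return to 0 in two steps through some state `k`; for
`k ≥ 1` this has probability `p_ε(k) · α^k (1 - αθ)`, and summing over `k` gives
`(1 - αθ)^2 + (1 - αθ) A`. The series for `A` converges because `α^k p_ε(k)` is a
combination of the geometric sequences `(αθ)^k` and `(αβ)^k`.
-/

theorem pow_mul_pEps (α β θ : ℝ) (k : ℕ) :
    α ^ k * pEps α β θ k
      = (α * θ - β) / (θ - β) * (1 - θ) * (α * θ) ^ k
        + (1 - (α * θ - β) / (θ - β)) * (1 - β) * (α * β) ^ k := by
  simp only [pEps, mul_pow]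
  ring

theorem summable_pow_mul_pEps {α β θ : ℝ} (hαθ : |α * θ| < 1) (hαβ : |α * β| < 1) :
    Summable fun k : ℕ => α ^ k * pEps α β θ k := by
  simp only [pow_mul_pEps]
  exact ((summable_geometric_of_abs_lt_one hαθ).mul_left _).add
    ((summable_geometric_of_abs_lt_one hαβ).mul_left _)

theorem hasSum_Aconst {α β θ : ℝ} (hαθ : |α * θ| < 1) (hαβ : |α * β| < 1) :
    HasSum (fun k : ℕ => α ^ (k + 1) * pEps α β θ (k + 1)) (Aconst α β θ) :=
  ((summable_nat_add_iff 1).mpr (summable_pow_mul_pEps hαθ hαβ)).hasSum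

theorem p1_zero_zero (α β θ : ℝ) : p1 α β θ 0 0 = 1 - α * θ := by
  simp [p1]

theorem p1_zero_mul_p1_succ_zero (α β θ : ℝ) (k : ℕ) :
    p1 α β θ 0 (k + 1) * p1 α β θ (k + 1) 0 = (1 - α * θ) * (α ^ (k + 1) * pEps α β θ (k + 1)) := by
  simp only [p1, Nat.succ_ne_zero, if_true, if_false]
  ring

theorem two_step_zero_zero_general (α β θ : ℝ) (hβ : 0 < β) (hβα : β < α) (hα : α < 1)
    (hβθ : β < θ) (hθ : θ < 1) :
    HasSum (fun k : ℕ => p1 α β θ 0 k * p1 α β θ k 0)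
      ((1 - α * θ) * (1 - α * θ + Aconst α β θ)) := by
  have hα0 : 0 < α := hβ.trans hβα
  have hθ0 : 0 < θ := hβ.trans hβθ
  have hαθ : |α * θ| < 1 := by
    rw [abs_of_pos (by positivity)]
    nlinarith
  have hαβ : |α * β| < 1 := by
    rw [abs_of_pos (by positivity)]
    nlinarith
  have hsucc : HasSum (fun k : ℕ => p1 α β θ 0 (k + 1) * p1 α β θ (k + 1) 0)
      ((1 - α * θ) * Aconst α β θ) := by
    simpa only [p1_zero_mul_p1_succ_zero] using (hasSum_Aconst hαθ hαβ).mul_left (1 - α * θ)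
  have h := HasSum.zero_add (f := fun k : ℕ => p1 α β θ 0 k * p1 α β θ k 0) hsucc
  rwa [p1_zero_zero, ← mul_add] at h

theorem two_step_zero_zero (α β θ : ℝ) (hβ : 0 < β) (hβα : β < α) (hα : α < 1)
    (hβθ : β < θ) (hθ : θ < 1) (hβαθ : β < α * θ) :
    HasSum (fun k : ℕ => p1 α β θ 0 k * p1 α β θ k 0)
      ((1 - α * θ) * (1 - α * θ + Aconst α β θ)) :=
  two_step_zero_zero_general α β θ hβ hβα hα hβθ hθ
end

section
/- (Theorem 3.1, case x ≥ 1, y ≥ 1.) Let 0 < β < α < 1, β < θ < 1 and β < αθ, let p_ε be the NoGeAR(1) innovation pmf and p1 the one-step transition function of the NoGeAR(1) chain, and set A = ∑_{k=1}^{∞} α^k p_ε(k) and B(x,k) as in the Chapman–Kolmogorov setup. Then for all integers x ≥ 1 and y ≥ 1, the two-step ahead transition probability from state y to state x satisfies ∑_{k=0}^{∞} p1(y,k)·p1(k,x) = α^y·p_ε(x)·(1−αθ+A) + p_ε(x)·∑_{k=1}^{∞} α^k·B(k,y) + α^y·∑_{k=1}^{∞} p_ε(k)·B(x,k) + ∑_{k=1}^{∞}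 B(x,k)·B(k,y), all series being convergent. -/
/-!
For `k ≥ 1` we have `p1 k x = α ^ k * pEps x + Bfun x k` (and symmetrically for `p1 y k`), while the
`k = 0` term is `α ^ y * (1 - α * θ) * pEps x`; expanding the product splits the Chapman–Kolmogorov
series into four series. These converge because, with `ρ = max θ β < 1`, `pEps k ≤ ρ ^ k`,
`Bfun x k = O(k ^ x * α ^ k)` and `Bfun k y = O(k ^ (y + 2) * ρ ^ k)`, so every product of two
factors is dominated by `k ^ N * (α * ρ) ^ k`.
-/

open Asymptotics Filter Finset

lemma pow_sub_le_pow_div {a : ℝ} (ha₀ : 0 < a) (ha₁ : a ≤ 1) {j k n : ℕ} (hjk : j ≤ k)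
    (hjn : j ≤ n) : a ^ (k - j) ≤ a ^ k / a ^ n := by
  rw [le_div_iff₀ (pow_pos ha₀ n)]
  calc a ^ (k - j) * a ^ n ≤ a ^ (k - j) * a ^ j :=
        mul_le_mul_of_nonneg_left (pow_le_pow_of_le_one ha₀.le ha₁ hjn) (by positivity)
    _ = a ^ k := by rw [← pow_add, Nat.sub_add_cancel hjk]

lemma sum_Icc_sum_Icc_min_le {f : ℕ → ℕ → ℝ} {T : ℝ} (a b : ℕ) (hT : 0 ≤ T)
    (hf : ∀ m ∈ Icc 1 a, ∀ j ∈ Icc 1 (min m b), f m j ≤ T) :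
    ∑ m ∈ Icc 1 a, ∑ j ∈ Icc 1 (min m b), f m j ≤ (a : ℝ) ^ 2 * T := by
  have hinner : ∀ m ∈ Icc 1 a, ∑ j ∈ Icc 1 (min m b), f m j ≤ a * T := by
    intro m hm
    refine (sum_le_card_nsmul _ _ _ (hf m hm)).trans ?_
    rw [Nat.card_Icc, nsmul_eq_mul]
    gcongr
    exact_mod_cast (min_le_left m b).trans (mem_Icc.mp hm).2
  calc ∑ m ∈ Icc 1 a, ∑ j ∈ Icc 1 (min m b), f m j ≤ (Icc 1 a).card • (a * T) :=
        sum_le_card_nsmul _ _ _ hinner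
    _ = (a : ℝ) ^ 2 * T := by rw [Nat.card_Icc, nsmul_eq_mul]; push_cast; ring

lemma isBigO_of_le_mul {f g : ℕ → ℝ} (C : ℝ) (hf : ∀ k, 0 ≤ f k) (hg : ∀ k, 0 ≤ g k)
    (hfg : ∀ k, f k ≤ C * g k) : f =O[atTop] g :=
  IsBigO.of_bound C <| Eventually.of_forall fun k => by
    rw [Real.norm_of_nonneg (hf k), Real.norm_of_nonneg (hg k)]
    exact hfg k

lemma summable_succ_mul_of_isBigO {f g : ℕ → ℝ} {a b : ℕ} {r s : ℝ} (hr₀ : 0 ≤ r) (hr₁ : r < 1)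
    (hs₀ : 0 ≤ s) (hs₁ : s ≤ 1) (hf : f =O[atTop] fun k => (k : ℝ) ^ a * r ^ k)
    (hg : g =O[atTop] fun k => (k : ℝ) ^ b * s ^ k) :
    Summable fun k => f (k + 1) * g (k + 1) := by
  have hrs : ‖r * s‖ < 1 := by
    rw [Real.norm_of_nonneg (mul_nonneg hr₀ hs₀)]
    exact mul_lt_one_of_nonneg_of_lt_one_left hr₀ hr₁ hs₁
  have hprod : (fun k => f k * g k) =O[atTop] fun k => (k : ℝ) ^ (a + b) * (r * s) ^ k :=
    (hf.mul hg).congr_right fun k => by ring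
  exact (summable_nat_add_iff 1).2
    (summable_of_isBigO_nat (summable_pow_mul_geometric_of_norm_lt_one _ hrs) hprod)

section NoGeAR

variable {α β θ : ℝ}

lemma pEps_weight_mem_Icc (hβθ : β < θ) (hθ : 0 ≤ θ) (hα : α ≤ 1) (hβαθ : β ≤ α * θ) :
    (α * θ - β) / (θ - β) ∈ Set.Icc 0 1 := by
  have hθβ : 0 < θ - β := sub_pos.mpr hβθ
  refine ⟨div_nonneg (by linarith) hθβ.le, (div_le_one hθβ).mpr ?_⟩
  nlinarith

lemma pEps_nonneg_s18 (hβ : 0 ≤ β) (hβθ : β < θ) (hθ : θ ≤ 1) (hα : α ≤ 1) (hβαθ : β ≤ α * θ)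
    (n : ℕ) : 0 ≤ pEps α β θ n := by
  obtain ⟨hw₀, hw₁⟩ := pEps_weight_mem_Icc hβθ (hβ.trans hβθ.le) hα hβαθ
  unfold pEps
  have hθ₀ : 0 ≤ θ := hβ.trans hβθ.le
  have h₁ := mul_nonneg (mul_nonneg hw₀ (pow_nonneg hθ₀ n)) (sub_nonneg.mpr hθ)
  have h₂ := mul_nonneg (mul_nonneg (sub_nonneg.mpr hw₁) (pow_nonneg hβ n))
    (sub_nonneg.mpr (hβθ.le.trans hθ))
  linarith

lemma pEps_le_pow_max (hβ : 0 ≤ β) (hβθ : β < θ) (hα : α ≤ 1)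
    (hβαθ : β ≤ α * θ) (n : ℕ) : pEps α β θ n ≤ max θ β ^ n := by
  have hθ₀ : 0 ≤ θ := hβ.trans hβθ.le
  obtain ⟨hw₀, hw₁⟩ := pEps_weight_mem_Icc hβθ hθ₀ hα hβαθ
  have hθn : θ ^ n * (1 - θ) ≤ max θ β ^ n :=
    (mul_le_of_le_one_right (by positivity) (by linarith)).trans
      (pow_le_pow_left₀ hθ₀ (le_max_left θ β) n)
  have hβn : β ^ n * (1 - β) ≤ max θ β ^ n :=
    (mul_le_of_le_one_right (by positivity) (by linarith)).trans
      (pow_le_pow_left₀ hβ (le_max_right θ β) n)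
  unfold pEps
  nlinarith

noncomputable def Bterm (α β θ : ℝ) (n k m j : ℕ) : ℝ :=
  (k.choose j : ℝ) * ((m - 1).choose (j - 1) : ℝ) *
    ((1 - α) * (1 - β)) ^ j * α ^ (k - j) * β ^ (m - j) * pEps α β θ (n - m)

lemma Bfun_eq_sum_Bterm (n k : ℕ) :
    Bfun α β θ n k = ∑ m ∈ Icc 1 n, ∑ j ∈ Icc 1 (min m k), Bterm α β θ n k m j :=
  rfl

lemma Bterm_nonneg (hα₀ : 0 ≤ α) (hα : α ≤ 1) (hβ : 0 ≤ β) (hβθ : β < θ) (hθ : θ ≤ 1)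
    (hβαθ : β ≤ α * θ) (n k m j : ℕ) : 0 ≤ Bterm α β θ n k m j := by
  have hc : 0 ≤ (1 - α) * (1 - β) := mul_nonneg (by linarith) (by linarith)
  have := pEps_nonneg_s18 hβ hβθ hθ hα hβαθ (n - m)
  unfold Bterm
  positivity

lemma Bfun_nonneg (hα₀ : 0 ≤ α) (hα : α ≤ 1) (hβ : 0 ≤ β) (hβθ : β < θ) (hθ : θ ≤ 1)
    (hβαθ : β ≤ α * θ) (n k : ℕ) : 0 ≤ Bfun α β θ n k :=
  sum_nonneg fun _ _ => sum_nonneg fun _ _ => Bterm_nonneg hα₀ hα hβ hβθ hθ hβαθ _ _ _ _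

lemma Bterm_le (hα₀ : 0 ≤ α) (hα : α ≤ 1) (hβ : 0 ≤ β) (hβθ : β < θ) (hθ : θ ≤ 1)
    (hβαθ : β ≤ α * θ) {n k m j : ℕ} (hjm : j ≤ m) (hmn : m ≤ n) :
    Bterm α β θ n k m j ≤
      (k.choose j : ℝ) * ((m - 1).choose (j - 1) : ℝ) * α ^ (k - j) * max θ β ^ (n - j) := by
  have hc₀ : 0 ≤ (1 - α) * (1 - β) := mul_nonneg (by linarith) (by linarith)
  have hc₁ : (1 - α) * (1 - β) ≤ 1 := by nlinarith
  have hβρ : β ^ (m - j) ≤ max θ β ^ (m - j) := pow_le_pow_left₀ hβ (le_max_right θ β) _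
  have hpε := pEps_le_pow_max hβ hβθ hα hβαθ (n - m)
  have hρ : max θ β ^ (m - j) * max θ β ^ (n - m) = max θ β ^ (n - j) := by
    rw [← pow_add]; congr 1; omega
  have hpε₀ := pEps_nonneg_s18 hβ hβθ hθ hα hβαθ (n - m)
  calc Bterm α β θ n k m j
      = (k.choose j : ℝ) * ((m - 1).choose (j - 1) : ℝ) * α ^ (k - j) *
          ((1 - α) * (1 - β)) ^ j * (β ^ (m - j) * pEps α β θ (n - m)) := by
        unfold Bterm; ring
    _ ≤ (k.choose j : ℝ) * ((m - 1).choose (j - 1) : ℝ) * α ^ (k - j) *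
          1 * (max θ β ^ (m - j) * max θ β ^ (n - m)) := by
        gcongr
        exact pow_le_one₀ hc₀ hc₁
    _ = _ := by rw [hρ, mul_one]

lemma isBigO_Bfun_right (hα₀ : 0 < α) (hα : α ≤ 1) (hβ : 0 ≤ β) (hβθ : β < θ) (hθ : θ ≤ 1)
    (hβαθ : β ≤ α * θ) (x : ℕ) :
    (fun k => Bfun α β θ x k) =O[atTop] fun k => (k : ℝ) ^ x * α ^ k := by
  have hρ₀ : 0 ≤ max θ β := hβ.trans (le_max_right θ β)
  have hρ₁ : max θ β ≤ 1 := max_le hθ (hβθ.le.trans hθ)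
  refine isBigO_of_le_mul ((x : ℝ) ^ 2 * 2 ^ x / α ^ x)
    (Bfun_nonneg hα₀.le hα hβ hβθ hθ hβαθ x) (fun k => by positivity) fun k => ?_
  calc Bfun α β θ x k ≤ (x : ℝ) ^ 2 * ((k : ℝ) ^ x * 2 ^ x * (α ^ k / α ^ x)) := by
        rw [Bfun_eq_sum_Bterm]
        refine sum_Icc_sum_Icc_min_le x k (by positivity) fun m hm j hj => ?_
        obtain ⟨hm₁, hmx⟩ := mem_Icc.mp hm
        obtain ⟨hj₁, hjmk⟩ := mem_Icc.mp hj
        have hjm : j ≤ m := hjmk.trans (min_le_left m k)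
        have hjk : j ≤ k := hjmk.trans (min_le_right m k)
        calc Bterm α β θ x k m j
            ≤ (k.choose j : ℝ) * ((m - 1).choose (j - 1) : ℝ) * α ^ (k - j) *
                max θ β ^ (x - j) := Bterm_le hα₀.le hα hβ hβθ hθ hβαθ hjm hmx
          _ ≤ (k : ℝ) ^ x * 2 ^ x * (α ^ k / α ^ x) * 1 := by
            gcongr ?_ * ?_ * ?_ * ?_
            · exact_mod_cast (Nat.choose_le_pow k j).trans
                (Nat.pow_le_pow_right (by omega) (by omega))
            · exact_mod_cast (Nat.choose_le_two_pow _ _).trans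
                (Nat.pow_le_pow_right two_pos (by omega))
            · exact pow_sub_le_pow_div hα₀ hα hjk (by omega)
            · exact pow_le_one₀ hρ₀ hρ₁
          _ = _ := mul_one _
    _ = _ := by ring

lemma isBigO_Bfun_left (hα₀ : 0 ≤ α) (hα : α ≤ 1) (hβ : 0 ≤ β) (hβθ : β < θ) (hθ : θ ≤ 1)
    (hβαθ : β ≤ α * θ) (y : ℕ) :
    (fun n => Bfun α β θ n y) =O[atTop] fun n => (n : ℝ) ^ (y + 2) * max θ β ^ n := by
  have hρ₀ : 0 < max θ β := (hβ.trans_lt hβθ).trans_le (le_max_left θ β)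
  have hρ₁ : max θ β ≤ 1 := max_le hθ (hβθ.le.trans hθ)
  refine isBigO_of_le_mul (2 ^ y / max θ β ^ y)
    (fun n => Bfun_nonneg hα₀ hα hβ hβθ hθ hβαθ n y) (fun n => by positivity) fun n => ?_
  calc Bfun α β θ n y
      ≤ (n : ℝ) ^ 2 * (2 ^ y * (n : ℝ) ^ y * 1 * (max θ β ^ n / max θ β ^ y)) := by
        rw [Bfun_eq_sum_Bterm]
        refine sum_Icc_sum_Icc_min_le n y (by positivity) fun m hm j hj => ?_
        obtain ⟨hm₁, hmn⟩ := mem_Icc.mp hm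
        obtain ⟨hj₁, hjmy⟩ := mem_Icc.mp hj
        have hjm : j ≤ m := hjmy.trans (min_le_left m y)
        have hjy : j ≤ y := hjmy.trans (min_le_right m y)
        calc Bterm α β θ n y m j
            ≤ (y.choose j : ℝ) * ((m - 1).choose (j - 1) : ℝ) * α ^ (y - j) *
                max θ β ^ (n - j) := Bterm_le hα₀ hα hβ hβθ hθ hβαθ hjm hmn
          _ ≤ 2 ^ y * (n : ℝ) ^ y * 1 * (max θ β ^ n / max θ β ^ y) := by
            gcongr ?_ * ?_ * ?_ * ?_
            · exact_mod_cast Nat.choose_le_two_pow y j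
            · exact_mod_cast (Nat.choose_le_pow _ _).trans
                ((Nat.pow_le_pow_left (by omega) _).trans
                  (Nat.pow_le_pow_right (by omega) (by omega)))
            · exact pow_le_one₀ hα₀ hα
            · exact pow_sub_le_pow_div hρ₀ hρ₁ (by omega) hjy
    _ = _ := by ring

lemma p1_of_ne_zero {y x : ℕ} (hy : y ≠ 0) (hx : x ≠ 0) :
    p1 α β θ y x = α ^ y * pEps α β θ x + Bfun α β θ x y := by
  rw [p1, if_neg hy, if_neg hx, Bfun]

lemma p1_mul_p1_zero {y x : ℕ} (hy : y ≠ 0) (hx : x ≠ 0) :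
    p1 α β θ y 0 * p1 α β θ 0 x = α ^ y * (1 - α * θ) * pEps α β θ x := by
  simp only [p1, if_neg hy, if_neg hx, if_true]

end NoGeAR

theorem two_step_y_x (α β θ : ℝ) (hβ : 0 < β) (hβα : β < α) (hα : α < 1)
    (hβθ : β < θ) (hθ : θ < 1) (hβαθ : β < α * θ)
    (x y : ℕ) (hx : 1 ≤ x) (hy : 1 ≤ y) :
    Summable (fun k : ℕ => α ^ (k + 1) * Bfun α β θ (k + 1) y) ∧
    Summable (fun k : ℕ => pEps α β θ (k + 1) * Bfun α β θ x (k + 1)) ∧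
    Summable (fun k : ℕ => Bfun α β θ x (k + 1) * Bfun α β θ (k + 1) y) ∧
    HasSum (fun k : ℕ => p1 α β θ y k * p1 α β θ k x)
      (α ^ y * pEps α β θ x * (1 - α * θ + Aconst α β θ)
        + pEps α β θ x * ∑' k : ℕ, α ^ (k + 1) * Bfun α β θ (k + 1) y
        + α ^ y * ∑' k : ℕ, pEps α β θ (k + 1) * Bfun α β θ x (k + 1)
        + ∑' k : ℕ, Bfun α β θ x (k + 1) * Bfun α β θ (k + 1) y) := by
  have hα₀ : 0 < α := hβ.trans hβα
  have hρ₀ : 0 ≤ max θ β := hβ.le.trans (le_max_right θ β)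
  have hρ₁ : max θ β < 1 := max_lt hθ (hβθ.trans hθ)
  have hpow : (fun k : ℕ => α ^ k) =O[atTop] fun k => (k : ℝ) ^ 0 * α ^ k :=
    (isBigO_refl _ _).congr_right fun k => by rw [pow_zero, one_mul]
  have hpε : (fun k => pEps α β θ k) =O[atTop] fun k => (k : ℝ) ^ 0 * max θ β ^ k :=
    isBigO_of_le_mul 1 (pEps_nonneg_s18 hβ.le hβθ hθ.le hα.le hβαθ.le) (fun k => by positivity)
      fun k => by simpa using pEps_le_pow_max hβ.le hβθ hα.le hβαθ.le k
  have hL := isBigO_Bfun_left hα₀.le hα.le hβ.le hβθ hθ.le hβαθ.le y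
  have hR := isBigO_Bfun_right hα₀ hα.le hβ.le hβθ hθ.le hβαθ.le x
  have hA := summable_succ_mul_of_isBigO hα₀.le hα hρ₀ hρ₁.le hpow hpε
  have h₁ := summable_succ_mul_of_isBigO hα₀.le hα hρ₀ hρ₁.le hpow hL
  have h₂ := summable_succ_mul_of_isBigO hρ₀ hρ₁ hα₀.le hα.le hpε hR
  have h₃ := summable_succ_mul_of_isBigO hα₀.le hα hρ₀ hρ₁.le hR hL
  refine ⟨h₁, h₂, h₃, ?_⟩
  have hx₀ : x ≠ 0 := by omega
  have hy₀ : y ≠ 0 := by omega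
  have H := (((hA.hasSum.mul_left (α ^ y * pEps α β θ x)).add
    (h₁.hasSum.mul_left (pEps α β θ x))).add (h₂.hasSum.mul_left (α ^ y))).add h₃.hasSum
  replace H := H.congr_fun (g := fun k => p1 α β θ y (k + 1) * p1 α β θ (k + 1) x) fun k => by
    rw [p1_of_ne_zero hy₀ (Nat.add_one_ne_zero k), p1_of_ne_zero (Nat.add_one_ne_zero k) hx₀]
    ring
  convert HasSum.zero_add (f := fun k => p1 α β θ y k * p1 α β θ k x) H using 1
  rw [p1_mul_p1_zero hy₀ hx₀, Aconst]
  ring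
end
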